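/- Let r ≥ 2 and n, t ≥ 1 be integers and let 𝔉_1,…,𝔉_r ⊆ 𝒫([n]) be r-cross t-intersecting families with maximal necessary intersection point a_*. Then for every j ∈ [r] and every F ∈ 𝔉_j(a_*), the set F \ {a_*} is not in 𝔉_j. -/

import Mathlib

open Finset

/-- The shift operation `σ_{ij}` on a set `F ⊆ ℕ`. -/
def shift (i j : ℕ) (F : Finset ℕ) : Finset ℕ :=
  if j ∈ F ∧ i ∉ F then insert i (F.erase j) else F

/-- The shift operation on a family. -/
def shiftFam (i j : ℕ) (𝔉 : Finset (Finset ℕ)) : Finset (Finset ℕ) :=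
  𝔉.image (shift i j) ∪ 𝔉.filter (fun F => shift i j F ∈ 𝔉)

/-- A family of subsets of `[n] = {1,…,n}` is shifted. -/
def IsShifted (n : ℕ) (𝔉 : Finset (Finset ℕ)) : Prop :=
  ∀ i j : ℕ, 1 ≤ i → i < j → j ≤ n → ∀ F ∈ 𝔉, shift i j F ∈ 𝔉

/-- The intersection `⋂_{i ∈ s} G i` (for `s` nonempty). -/
def interOn {r : ℕ} (s : Finset (Fin r)) (G : Fin r → Finset ℕ) : Finset ℕ :=
  (s.sup G).filter fun x => ∀ i ∈ s, x ∈ G i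

/-- The intersection `⋂_{i} G i`. -/
def interAll {r : ℕ} (G : Fin r → Finset ℕ) : Finset ℕ :=
  interOn Finset.univ G

/-- Families `𝔉 0, …, 𝔉 (r-1)` are `r`-cross `t`-intersecting. -/
def CrossIntersecting {r : ℕ} (t : ℕ) (𝔉 : Fin r → Finset (Finset ℕ)) : Prop :=
  ∀ G : Fin r → Finset ℕ, (∀ i, G i ∈ 𝔉 i) → t ≤ (interAll G).card

/-- `a` is a necessary intersection point of the cross `t`-intersecting families `𝔉`. -/
def IsNIP {r : ℕ} (t : ℕ) (𝔉 : Fin r → Finset (Finset ℕ)) (a : ℕ) : Prop :=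
  ∃ G : Fin r → Finset ℕ, (∀ i, G i ∈ 𝔉 i) ∧
    (Finset.Icc 1 a ∩ interAll G).card = t ∧ a ∈ interAll G

/-- An intersecting family. -/
def Intersecting' (𝔉 : Finset (Finset ℕ)) : Prop :=
  ∀ F ∈ 𝔉, ∀ F' ∈ 𝔉, (F ∩ F').Nonempty

/-- `a` is a necessary intersection point of the intersecting family `𝔉`. -/
def IsNIP1 (𝔉 : Finset (Finset ℕ)) (a : ℕ) : Prop :=
  ∃ F ∈ 𝔉, ∃ F' ∈ 𝔉, (Finset.Icc 1 a ∩ F ∩ F').card = 1 ∧ a ∈ F ∩ F'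

/-- `A_{n,a,t} = {F ⊆ [n] : |F ∩ [a]| ≥ t}`. -/
def famA (n a t : ℕ) : Finset (Finset ℕ) :=
  (Finset.Icc 1 n).powerset.filter (fun F => t ≤ (F ∩ Finset.Icc 1 a).card)

/-- `B_{n,a} = {F ⊆ [n] : [a] ⊆ F}`. -/
def famB (n a : ℕ) : Finset (Finset ℕ) :=
  (Finset.Icc 1 n).powerset.filter (fun F => Finset.Icc 1 a ⊆ F)

/-- `F ∈ 𝔉 j` depends on `a`, i.e. `F ∈ 𝔉_j(a)`. -/
def FamDependsOn {r : ℕ} (t : ℕ) (𝔉 : Fin r → Finset (Finset ℕ)) (a : ℕ) (j : Fin r)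
    (F : Finset ℕ) : Prop :=
  F ∈ 𝔉 j ∧ ∃ G : Fin r → Finset ℕ, (∀ i, i ≠ j → G i ∈ 𝔉 i) ∧
    (Finset.Icc 1 a ∩ F ∩ interOn (Finset.univ.erase j) G).card = t ∧
    a ∈ F ∩ interOn (Finset.univ.erase j) G

lemma erase_univ_nonempty {r : ℕ} (hr : 2 ≤ r) (i : Fin r) :
    (Finset.univ.erase i).Nonempty := by
  rw [← Finset.card_pos, Finset.card_erase_of_mem (Finset.mem_univ i),
    Finset.card_univ, Fintype.card_fin]
  omega

/- If `F \ {a_*}` were in `𝔉_j`, replacing `F` by it in a witness `G` of `F ∈ 𝔉_j(a_*)` loses exactly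
the point `a_*` of the intersection below `a_*`. Cross `t`-intersection forces the new intersection
to have a point above `a_*`, and its least such point `b` satisfies `|[b] ∩ ⋂ G| = t`: `b` is a
necessary intersection point beyond `a_*`. -/

lemma mem_interOn {r : ℕ} {s : Finset (Fin r)} {G : Fin r → Finset ℕ} {x : ℕ} :
    x ∈ interOn s G ↔ s.Nonempty ∧ ∀ i ∈ s, x ∈ G i := by
  simp only [interOn, mem_filter, mem_sup]
  constructor
  · rintro ⟨⟨i, hi, -⟩, h⟩
    exact ⟨⟨i, hi⟩, h⟩
  · rintro ⟨⟨i, hi⟩, h⟩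
    exact ⟨⟨i, hi, h i hi⟩, h⟩

lemma interAll_update_eq_inter_interOn {r : ℕ} {G : Fin r → Finset ℕ} {j : Fin r}
    (hj : (univ.erase j).Nonempty) (A : Finset ℕ) :
    interAll (Function.update G j A) = A ∩ interOn (univ.erase j) G := by
  ext x
  simp only [interAll, mem_interOn, univ_nonempty_iff.2 ⟨j⟩, mem_univ, forall_const, true_and,
    hj, mem_inter, mem_erase, and_true]
  exact Function.forall_update_iff G fun i y => x ∈ y

lemma exists_gt_card_Icc_inter_eq_succ {S : Finset ℕ} (hS : 0 ∉ S) {a : ℕ}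
    (h : #(Icc 1 a ∩ S) < #S) :
    ∃ b ∈ S, a < b ∧ #(Icc 1 b ∩ S) = #(Icc 1 a ∩ S) + 1 := by
  have hT : (S.filter (a < ·)).Nonempty := by
    by_contra! hT
    refine h.not_ge (card_le_card fun x hx => ?_)
    have hxa : ¬a < x := filter_eq_empty_iff.1 hT hx
    have hx0 : x ≠ 0 := ne_of_mem_of_not_mem hx hS
    exact mem_inter.2 ⟨mem_Icc.2 ⟨by omega, by omega⟩, hx⟩
  obtain ⟨hbS, hab⟩ := mem_filter.1 (min'_mem _ hT)
  set b := (S.filter (a < ·)).min' hT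
  have hmin : ∀ x ∈ S, a < x → b ≤ x := fun x hx hax => min'_le _ x (mem_filter.2 ⟨hx, hax⟩)
  have hsplit : Icc 1 b ∩ S = insert b (Icc 1 a ∩ S) := by
    ext x
    simp only [mem_inter, mem_insert, mem_Icc]
    constructor
    · rintro ⟨⟨hx1, hxb⟩, hx⟩
      by_cases hxa : x ≤ a
      · exact Or.inr ⟨⟨hx1, hxa⟩, hx⟩
      · exact Or.inl (le_antisymm hxb (hmin x hx (by omega)))
    · rintro (rfl | ⟨⟨hx1, hxa⟩, hx⟩)
      · exact ⟨⟨by omega, le_rfl⟩, hbS⟩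
      · exact ⟨⟨hx1, by omega⟩, hx⟩
  refine ⟨b, hbS, hab, ?_⟩
  rw [hsplit, card_insert_of_notMem (by simp only [mem_inter, mem_Icc]; omega)]

theorem erase_not_mem_of_dependsOn_general
    (r n t : ℕ)
    (𝔉 : Fin r → Finset (Finset ℕ)) (hsub : ∀ i, 𝔉 i ⊆ (Finset.Icc 1 n).powerset)
    (hcross : CrossIntersecting t 𝔉)
    (astar : ℕ) (hmax : ∀ b, IsNIP t 𝔉 b → b ≤ astar)
    (j : Fin r) (F : Finset ℕ) (hdep : FamDependsOn t 𝔉 astar j F) :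
    F.erase astar ∉ 𝔉 j := by
  intro hmem
  obtain ⟨hF, G, hG, hcard, haFI⟩ := hdep
  obtain ⟨haF, haI⟩ := mem_inter.1 haFI
  set I := interOn (univ.erase j) G
  set G' := Function.update G j (F.erase astar)
  have hG' : ∀ i, G' i ∈ 𝔉 i := (Function.forall_update_iff G fun i A => A ∈ 𝔉 i).2 ⟨hmem, hG⟩
  have hinter : interAll G' = F.erase astar ∩ I :=
    interAll_update_eq_inter_interOn (mem_interOn.1 haI).1 _
  have hbelow : #(Icc 1 astar ∩ interAll G') + 1 = t := by
    have ha : astar ∈ Icc 1 astar ∩ F ∩ I :=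
      mem_inter.2 ⟨mem_inter.2 ⟨mem_Icc.2 ⟨(mem_Icc.1 (mem_powerset.1 (hsub j hF) haF)).1,
        le_rfl⟩, haF⟩, haI⟩
    rw [hinter, erase_inter, inter_erase, ← inter_assoc, card_erase_add_one ha, hcard]
  have h0 : 0 ∉ interAll G' := fun h0 => by
    have := mem_powerset.1 (hsub j hF) (mem_of_mem_erase (mem_inter.1 (hinter ▸ h0)).1)
    simp at this
  obtain ⟨b, hb, hab, hcardb⟩ :=
    exists_gt_card_Icc_inter_eq_succ h0 (a := astar) (by have := hcross G' hG'; omega)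
  exact absurd (hmax b ⟨G', hG', hcardb.trans hbelow, hb⟩) (not_le.2 hab)

/-- For `F ∈ 𝔉_j(a_*)`, the set `F \ {a_*}` is not in `𝔉_j`. -/
theorem erase_not_mem_of_dependsOn
    (r n t : ℕ) (hr : 2 ≤ r) (hn : 1 ≤ n) (ht : 1 ≤ t)
    (𝔉 : Fin r → Finset (Finset ℕ)) (hsub : ∀ i, 𝔉 i ⊆ (Finset.Icc 1 n).powerset)
    (hcross : CrossIntersecting t 𝔉)
    (astar : ℕ) (hNIP : IsNIP t 𝔉 astar) (hmax : ∀ b, IsNIP t 𝔉 b → b ≤ astar)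
    (j : Fin r) (F : Finset ℕ) (hdep : FamDependsOn t 𝔉 astar j F) :
    F.erase astar ∉ 𝔉 j :=
  erase_not_mem_of_dependsOn_general r n t 𝔉 hsub hcross astar hmax j F hdep
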